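/- Consider a divisible homogeneous good to be split between two agents with entitlements b_1 = 1/3 and b_2 = 2/3 and valuations v_1(x) = x and v_2(x) = √x on [0,1]. Define the weighted maximin share of agent i as WMMS_i = the supremum over pairs (y_1, y_2) with y_1, y_2 ≥ 0 and y_1 + y_2 = 1 of min_j (b_i / b_j) · v_i(y_j). Then WMMS_1 = 1/3 and WMMS_2 = 2/√5, and there is no allocation (x_1, x_2) with x_1, x_2 ≥ 0 and x_1 + x_2 = 1 satisfying both v_1(x_1) ≥ WMMS_1 and v_2(x_2) ≥ WMMS_2. -/
import Mathlib

lemma sqrt5_pos : (0:ℝ) < Real.sqrt 5 := Real.sqrt_pos.mpr (by norm_num)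

lemma sqrt_four_fifth : Real.sqrt (4/5) = 2 / Real.sqrt 5 := by
  rw [Real.sqrt_div' 4 (by norm_num), show Real.sqrt 4 = 2 by
    rw [show (4:ℝ) = 2^2 by norm_num, Real.sqrt_sq (by norm_num)]]

lemma sqrt_one_fifth : 2 * Real.sqrt (1/5) = 2 / Real.sqrt 5 := by
  rw [show (1:ℝ)/5 = 5⁻¹ by norm_num, Real.sqrt_inv]
  field_simp

/-- For a divisible homogeneous good split between two agents with
entitlements `(1/3, 2/3)` and valuations `v₁(x) = x`, `v₂(x) = √x`, the weighted
maximin shares are `WMMS₁ = 1/3` and `WMMS₂ = 2/√5`, and no allocation gives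
both agents their WMMS. -/
theorem stmt_6 :
    let v1 : ℝ → ℝ := fun x => x
    let v2 : ℝ → ℝ := fun x => Real.sqrt x
    -- WMMS of agent 1: sup over allocations (y1, y2) of min_j (b1/bj) · v1(yj)
    let W1 : ℝ := sSup {t : ℝ | ∃ y1 y2 : ℝ, 0 ≤ y1 ∧ 0 ≤ y2 ∧ y1 + y2 = 1 ∧
      t = min (v1 y1) ((1 / 2) * v1 y2)}
    -- WMMS of agent 2: sup over allocations (y1, y2) of min_j (b2/bj) · v2(yj)
    let W2 : ℝ := sSup {t : ℝ | ∃ y1 y2 : ℝ, 0 ≤ y1 ∧ 0 ≤ y2 ∧ y1 + y2 = 1 ∧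
      t = min (2 * v2 y1) (v2 y2)}
    W1 = 1 / 3 ∧ W2 = 2 / Real.sqrt 5 ∧
      ¬ ∃ x1 x2 : ℝ, 0 ≤ x1 ∧ 0 ≤ x2 ∧ x1 + x2 = 1 ∧ W1 ≤ v1 x1 ∧ W2 ≤ v2 x2 := by
  intro v1 v2 W1 W2
  have hW1 : W1 = 1/3 := by
    apply le_antisymm
    · apply csSup_le
      · exact ⟨1/3, 1/3, 2/3, by norm_num, by norm_num, by norm_num, by norm_num [v1]⟩
      · rintro t ⟨y1, y2, hy1, hy2, hsum, rfl⟩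
        simp only [v1]
        rcases le_total y1 (1/3) with h | h
        · exact le_trans (min_le_left _ _) h
        · exact le_trans (min_le_right _ _) (by nlinarith)
    · apply le_csSup
      · refine ⟨1/3, ?_⟩
        rintro t ⟨y1, y2, hy1, hy2, hsum, rfl⟩
        simp only [v1]
        rcases le_total y1 (1/3) with h | h
        · exact le_trans (min_le_left _ _) h
        · exact le_trans (min_le_right _ _) (by nlinarith)
      · exact ⟨1/3, 2/3, by norm_num, by norm_num, by norm_num, by norm_num [v1]⟩
  have hub2 : ∀ t ∈ {t : ℝ | ∃ y1 y2 : ℝ, 0 ≤ y1 ∧ 0 ≤ y2 ∧ y1 + y2 = 1 ∧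
      t = min (2 * v2 y1) (v2 y2)}, t ≤ 2 / Real.sqrt 5 := by
    rintro t ⟨y1, y2, hy1, hy2, hsum, rfl⟩
    simp only [v2]
    rcases le_total y1 (1/5) with h | h
    · refine le_trans (min_le_left _ _) ?_
      rw [← sqrt_one_fifth]
      have := Real.sqrt_le_sqrt h
      linarith
    · refine le_trans (min_le_right _ _) ?_
      rw [← sqrt_four_fifth]
      exact Real.sqrt_le_sqrt (by linarith)
  have hmem2 : (2 / Real.sqrt 5) ∈ {t : ℝ | ∃ y1 y2 : ℝ, 0 ≤ y1 ∧ 0 ≤ y2 ∧ y1 + y2 = 1 ∧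
      t = min (2 * v2 y1) (v2 y2)} := by
    refine ⟨1/5, 4/5, by norm_num, by norm_num, by norm_num, ?_⟩
    simp only [v2]
    rw [sqrt_one_fifth, sqrt_four_fifth, min_self]
  have hW2 : W2 = 2 / Real.sqrt 5 := by
    apply le_antisymm
    · exact csSup_le ⟨_, hmem2⟩ hub2
    · exact le_csSup ⟨_, hub2⟩ hmem2
  refine ⟨hW1, hW2, ?_⟩
  rintro ⟨x1, x2, hx1, hx2, hsum, h1, h2⟩
  rw [hW1] at h1
  rw [hW2, ← sqrt_four_fifth] at h2
  simp only [v1] at h1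
  have : (4:ℝ)/5 ≤ x2 := by
    have := Real.sqrt_le_sqrt (le_of_lt (show x2 < 4/5 from by nlinarith))
    nlinarith [Real.sq_sqrt (show (0:ℝ) ≤ x2 from hx2), Real.sqrt_nonneg x2,
      Real.sq_sqrt (show (0:ℝ) ≤ 4/5 by norm_num)]
  linarith
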